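/- arXiv:1902.04440 — 8 statements merged into one kernel-verified Lean document; each statement's English description precedes it below -/
import Mathlib

section
/- Let F be a field and let A₁ be an m₁×n matrix and A₂ an m₂×n matrix over F. Assume A₁ is not of full column rank, and let N be an n×k matrix over F that is of full column rank and whose column span (the range of the linear map x ↦ N *ᵥ x) equals the kernel of the linear map x ↦ A₁ *ᵥ x. Then the stacked (m₁+m₂)×n matrix [A₁; A₂] is of full column rank if and only if the matrix A₂ * N is of full column rank. -/
open scoped Matrix


/-- If `A₁` is not of full column rank and `N` is a full-column-rank matrix
whose range equals the kernel of `A₁`, then the stacked matrix `[A₁; A₂]` is of full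
column rank iff `A₂ * N` is. -/
theorem stmt0 {F : Type*} [Field F] {m₁ m₂ n k : ℕ}
    (A₁ : Matrix (Fin m₁) (Fin n) F) (A₂ : Matrix (Fin m₂) (Fin n) F)
    (N : Matrix (Fin n) (Fin k) F)
    (hA₁ : ¬ Function.Injective A₁.mulVecLin)
    (hN : Function.Injective N.mulVecLin)
    (hrange : LinearMap.range N.mulVecLin = LinearMap.ker A₁.mulVecLin) :
    Function.Injective (Matrix.fromRows A₁ A₂).mulVecLin ↔
      Function.Injective (A₂ * N).mulVecLin := by
  rw [injective_iff_map_eq_zero, injective_iff_map_eq_zero]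
  constructor
  · intro h x hx
    have h1 : A₁ *ᵥ (N *ᵥ x) = 0 := by
      have : N.mulVecLin x ∈ LinearMap.ker A₁.mulVecLin := by
        rw [← hrange]; exact ⟨x, rfl⟩
      simpa using this
    have h2 : A₂ *ᵥ (N *ᵥ x) = 0 := by
      simpa [Matrix.mulVec_mulVec] using hx
    have hz : N *ᵥ x = 0 := by
      have := h (N *ᵥ x) (by
        simp only [Matrix.mulVecLin_apply, Matrix.fromRows_mulVec, Matrix.mulVec_mulVec] at *
        simp [h1, h2])
      simpa using this
    have : N.mulVecLin x = N.mulVecLin 0 := by simpa using hz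
    exact hN this
  · intro h v hv
    simp only [Matrix.mulVecLin_apply, Matrix.fromRows_mulVec] at hv
    have h1 : A₁ *ᵥ v = 0 := by
      have := congrArg (fun f => f ∘ Sum.inl) hv
      ext i; exact congrFun this i
    have h2 : A₂ *ᵥ v = 0 := by
      have := congrArg (fun f => f ∘ Sum.inr) hv
      ext i; exact congrFun this i
    have hv1 : v ∈ LinearMap.range N.mulVecLin := by
      rw [hrange]; simpa using h1
    obtain ⟨x, hx⟩ := hv1
    have : x = 0 := h x (by
      rw [Matrix.mulVecLin_apply, ← Matrix.mulVec_mulVec]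
      rw [Matrix.mulVecLin_apply] at hx
      rw [hx]; exact h2)
    rw [← hx, this]; simp
end

section
/- Let F be a field and let A₁ : r₁×c₁, A₂ : r₂×c₂, A₃ : r₃×c₃, B₁ : r_B×c₁, B₂ : r_B×c₂, B₃ : r_B×c₃ be matrices over F, and assume A₂ is of full column rank. Then the ((r₁+r₂+r₃)+r_B)×(c₁+c₂+c₃) block matrix whose top part is the block-diagonal matrix diag{A₁, A₂, A₃} and whose bottom row block is [B₁ B₂ B₃] is of full column rank if and only if the ((r₁+r₃)+r_B)×(c₁+c₃) block matrix whose top part is diag{A₁, A₃} and whose bottom row block is [B₁ B₃] is of full column rank. -/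
/-!
Both matrices act on a vector blockwise, so its kernel is cut out by `Aᵢ xᵢ = 0` together with
`∑ Bᵢ xᵢ = 0`. Injectivity of `A₂` forces `x₂ = 0` in the kernel of the larger matrix, and then
the two kernel conditions coincide.
-/

open Matrix

theorem Sum.forall_elim {α β γ : Type*} {p : (α ⊕ β → γ) → Prop} :
    (∀ v, p v) ↔ ∀ f g, p (Sum.elim f g) :=
  ⟨fun h _ _ ↦ h _, fun h v ↦ Sum.elim_comp_inl_inr v ▸ h _ _⟩

namespace Matrix

variable {R : Type*} [CommRing R]

theorem injective_mulVecLin_iff {m n : Type*} [Fintype n] (M : Matrix m n R) :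
    Function.Injective M.mulVecLin ↔ ∀ v, M *ᵥ v = 0 → v = 0 := by
  rw [← LinearMap.ker_eq_bot, ker_mulVecLin_eq_bot_iff]

theorem fromBlocks_zero_zero_mulVec_sumElim {m₁ m₂ n₁ n₂ : Type*} [Fintype n₁] [Fintype n₂]
    (A : Matrix m₁ n₁ R) (D : Matrix m₂ n₂ R) (x : n₁ → R) (y : n₂ → R) :
    fromBlocks A 0 0 D *ᵥ Sum.elim x y = Sum.elim (A *ᵥ x) (D *ᵥ y) := by
  simp [fromBlocks_mulVec]

end Matrix

/-- If `A₂` is of full column rank, then the block matrix with top part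
`diag{A₁, A₂, A₃}` and bottom row block `[B₁ B₂ B₃]` is of full column rank iff the
block matrix with top part `diag{A₁, A₃}` and bottom row block `[B₁ B₃]` is. -/
theorem stmt1 {F : Type*} [Field F] {r₁ r₂ r₃ rB c₁ c₂ c₃ : ℕ}
    (A₁ : Matrix (Fin r₁) (Fin c₁) F) (A₂ : Matrix (Fin r₂) (Fin c₂) F)
    (A₃ : Matrix (Fin r₃) (Fin c₃) F)
    (B₁ : Matrix (Fin rB) (Fin c₁) F) (B₂ : Matrix (Fin rB) (Fin c₂) F)
    (B₃ : Matrix (Fin rB) (Fin c₃) F)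
    (hA₂ : Function.Injective A₂.mulVecLin) :
    Function.Injective (Matrix.fromRows
        (Matrix.fromBlocks (Matrix.fromBlocks A₁ 0 0 A₂) 0 0 A₃)
        (Matrix.fromCols (Matrix.fromCols B₁ B₂) B₃)).mulVecLin ↔
      Function.Injective (Matrix.fromRows
        (Matrix.fromBlocks A₁ 0 0 A₃)
        (Matrix.fromCols B₁ B₃)).mulVecLin := by
  have hA₂_ker (x : Fin c₂ → F) : A₂ *ᵥ x = 0 ↔ x = 0 :=
    ⟨(injective_mulVecLin_iff A₂).1 hA₂ x, fun hx ↦ hx ▸ mulVec_zero A₂⟩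
  simp only [injective_mulVecLin_iff, Sum.forall_elim, fromRows_mulVec,
    fromBlocks_zero_zero_mulVec_sumElim, fromCols_mulVec_sumElim, ← Sum.elim_zero_zero,
    Sum.elim_eq_iff, hA₂_ker, and_imp]
  constructor
  · intro h x₁ x₃ h₁ h₃ hB
    simpa using h x₁ 0 x₃ h₁ rfl h₃ (by simpa using hB)
  · rintro h x₁ x₂ x₃ h₁ rfl h₃ hB
    simpa using h x₁ x₃ h₁ h₃ (by simpa using hB)
end

section
/- Let F be a field, m a positive integer, and for each j ∈ {1,…,m} let A₁⁽ʲ⁾ : r₁×c₁, A₂⁽ʲ⁾ : r₂×c₂, A₃⁽ʲ⁾ : r₃×c₃ and B₁⁽ʲ⁾ : r_B×c₁, B₂⁽ʲ⁾ : r_B×c₂, B₃⁽ʲ⁾ : r_B×c₃ be matrices over F. Assume that the r₂×(m·c₂) matrix [A₂⁽¹⁾ A₂⁽²⁾ ⋯ A₂⁽ᵐ⁾] obtained by horizontal concatenation is of full column rank. Then the ((r₁+r₂+r₃)+r_B)×(m·(c₁+c₂+c₃)) matrix whose j-th column block is the block matrix with top part diag{A₁⁽ʲ⁾, A₂⁽ʲ⁾,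 A₃⁽ʲ⁾} and bottom row block [B₁⁽ʲ⁾ B₂⁽ʲ⁾ B₃⁽ʲ⁾] is of full column rank, if and only if the ((r₁+r₃)+r_B)×(m·(c₁+c₃)) matrix whose j-th column block has top part diag{A₁⁽ʲ⁾, A₃⁽ʲ⁾} and bottom row block [B₁⁽ʲ⁾ B₃⁽ʲ⁾] is of full column rank. -/
/-!
After permuting rows and columns, the big matrix becomes block upper triangular,
`[[N, X], [0, [A₂⁽¹⁾ ⋯ A₂⁽ᵐ⁾]]]`, where `N` is the small matrix and `X` collects the
`B₂⁽ʲ⁾`. With an injective lower-right block, such a matrix is injective iff `N` is: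
a kernel vector `(u, w)` has `w = 0` by the bottom rows, and then `N u = 0`.
-/

/-- The horizontal concatenation of a finite family of matrices sharing the same
row index type: the `j`-th column block is `M j`. -/
def hconcat {F : Type*} {m : ℕ} {R C : Type*} (M : Fin m → Matrix R C F) :
    Matrix R (Fin m × C) F :=
  Matrix.of fun i p => M p.1 i p.2

open Matrix Function

namespace Matrix

variable {R k l m n : Type*} [CommRing R]

theorem mulVecLin_reindex_injective_iff [Fintype l] [Fintype n] (e₁ : k ≃ m) (e₂ : l ≃ n)
    (M : Matrix k l R) :
    Injective (reindex e₁ e₂ M).mulVecLin ↔ Injective M.mulVecLin := by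
  rw [mulVecLin_reindex, LinearMap.coe_comp, LinearMap.coe_comp, LinearEquiv.coe_coe,
    LinearEquiv.coe_coe, EquivLike.comp_injective, EquivLike.injective_comp]

theorem mulVecLin_fromBlocks_zero_injective_iff [Fintype l] [Fintype n]
    (P : Matrix k l R) (X : Matrix k n R) (Q : Matrix m n R) (hQ : Injective Q.mulVecLin) :
    Injective (fromBlocks P X 0 Q).mulVecLin ↔ Injective P.mulVecLin := by
  simp only [← LinearMap.ker_eq_bot, LinearMap.ker_eq_bot', mulVecLin_apply] at hQ ⊢
  constructor
  · intro h u hu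
    simpa using congrArg (· ∘ Sum.inl) (h (Sum.elim u 0) (by simp [fromBlocks_mulVec, hu]))
  · intro hP v hv
    rw [← Sum.elim_comp_inl_inr v, fromBlocks_mulVec] at hv
    have hw : v ∘ Sum.inr = 0 := hQ _ (by simpa using congrArg (· ∘ Sum.inr) hv)
    have hu : v ∘ Sum.inl = 0 := hP _ (by simpa [hw] using congrArg (· ∘ Sum.inl) hv)
    rw [← Sum.elim_comp_inl_inr v, hu, hw, Sum.elim_zero_zero]

end Matrix

def Equiv.sumRightComm (α β γ : Type*) : (α ⊕ β) ⊕ γ ≃ (α ⊕ γ) ⊕ β :=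
  (sumAssoc α β γ).trans <| (sumCongr (Equiv.refl α) (sumComm β γ)).trans (sumAssoc α γ β).symm

theorem hconcat_fromRows_eq_reindex_fromBlocks {R : Type*} [Zero R] {m : ℕ}
    {R₁ R₂ R₃ RB C₁ C₂ C₃ : Type*}
    (A₁ : Fin m → Matrix R₁ C₁ R) (A₂ : Fin m → Matrix R₂ C₂ R) (A₃ : Fin m → Matrix R₃ C₃ R)
    (B₁ : Fin m → Matrix RB C₁ R) (B₂ : Fin m → Matrix RB C₂ R) (B₃ : Fin m → Matrix RB C₃ R) :
    hconcat (fun j => fromRows (fromBlocks (fromBlocks (A₁ j) 0 0 (A₂ j)) 0 0 (A₃ j))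
        (fromCols (fromCols (B₁ j) (B₂ j)) (B₃ j))) =
      reindex
        ((Equiv.sumCongr (Equiv.sumRightComm _ _ _) (Equiv.refl _)).trans
          (Equiv.sumRightComm _ _ _)).symm
        ((Equiv.prodCongrRight fun _ => Equiv.sumRightComm _ _ _).trans
          (Equiv.prodSumDistrib _ _ _)).symm
        (fromBlocks
          (hconcat fun j => fromRows (fromBlocks (A₁ j) 0 0 (A₃ j)) (fromCols (B₁ j) (B₃ j)))
          (fromRows 0 (hconcat B₂)) 0 (hconcat A₂)) := by
  ext (((i | i) | i) | i) ⟨j, (c | c) | c⟩ <;> simp [hconcat, Equiv.sumRightComm]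

theorem stmt2_general {F : Type*} [Field F] {m : ℕ}
    {r₁ r₂ r₃ rB c₁ c₂ c₃ : ℕ}
    (A₁ : Fin m → Matrix (Fin r₁) (Fin c₁) F)
    (A₂ : Fin m → Matrix (Fin r₂) (Fin c₂) F)
    (A₃ : Fin m → Matrix (Fin r₃) (Fin c₃) F)
    (B₁ : Fin m → Matrix (Fin rB) (Fin c₁) F)
    (B₂ : Fin m → Matrix (Fin rB) (Fin c₂) F)
    (B₃ : Fin m → Matrix (Fin rB) (Fin c₃) F)
    (hA₂ : Function.Injective (hconcat A₂).mulVecLin) :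
    Function.Injective (hconcat (fun j => Matrix.fromRows
        (Matrix.fromBlocks (Matrix.fromBlocks (A₁ j) 0 0 (A₂ j)) 0 0 (A₃ j))
        (Matrix.fromCols (Matrix.fromCols (B₁ j) (B₂ j)) (B₃ j)))).mulVecLin ↔
      Function.Injective (hconcat (fun j => Matrix.fromRows
        (Matrix.fromBlocks (A₁ j) 0 0 (A₃ j))
        (Matrix.fromCols (B₁ j) (B₃ j)))).mulVecLin := by
  rw [hconcat_fromRows_eq_reindex_fromBlocks, mulVecLin_reindex_injective_iff,
    mulVecLin_fromBlocks_zero_injective_iff _ _ _ hA₂]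

/-- If the horizontal concatenation `[A₂⁽¹⁾ ⋯ A₂⁽ᵐ⁾]` is of full column
rank, then the horizontal concatenation of the block matrices with top parts
`diag{A₁⁽ʲ⁾, A₂⁽ʲ⁾, A₃⁽ʲ⁾}` and bottom row blocks `[B₁⁽ʲ⁾ B₂⁽ʲ⁾ B₃⁽ʲ⁾]` is of full
column rank iff the horizontal concatenation of the block matrices with top parts
`diag{A₁⁽ʲ⁾, A₃⁽ʲ⁾}` and bottom row blocks `[B₁⁽ʲ⁾ B₃⁽ʲ⁾]` is. -/
theorem stmt2 {F : Type*} [Field F] {m : ℕ} (hm : 0 < m)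
    {r₁ r₂ r₃ rB c₁ c₂ c₃ : ℕ}
    (A₁ : Fin m → Matrix (Fin r₁) (Fin c₁) F)
    (A₂ : Fin m → Matrix (Fin r₂) (Fin c₂) F)
    (A₃ : Fin m → Matrix (Fin r₃) (Fin c₃) F)
    (B₁ : Fin m → Matrix (Fin rB) (Fin c₁) F)
    (B₂ : Fin m → Matrix (Fin rB) (Fin c₂) F)
    (B₃ : Fin m → Matrix (Fin rB) (Fin c₃) F)
    (hA₂ : Function.Injective (hconcat A₂).mulVecLin) :
    Function.Injective (hconcat (fun j => Matrix.fromRows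
        (Matrix.fromBlocks (Matrix.fromBlocks (A₁ j) 0 0 (A₂ j)) 0 0 (A₃ j))
        (Matrix.fromCols (Matrix.fromCols (B₁ j) (B₂ j)) (B₃ j)))).mulVecLin ↔
      Function.Injective (hconcat (fun j => Matrix.fromRows
        (Matrix.fromBlocks (A₁ j) 0 0 (A₃ j))
        (Matrix.fromCols (B₁ j) (B₃ j)))).mulVecLin :=
  stmt2_general A₁ A₂ A₃ B₁ B₂ B₃ hA₂
end

section
/- Let F be a field and let A_xx : n×n, A_xv : n×v, A_zx : z×n, A_zv : z×v, C_x : p×n, C_v : p×v and Φ̄ : v×z be matrices over F. Let N_cx : n×k and N_cv : v×k be matrices such that the stacked (n+v)×k matrix [N_cx; N_cv] is of full column rank and the range of its associated linear map equals the kernel of the linear map associated with the p×(n+v) matrix [C_x C_v]. Then for every λ ∈ F, the (n+p+v)×(n+v) matrix M(λ) = [λ•1 − A_xx, −A_xv; −C_x, −C_v; −Φ̄*A_zx, 1 − Φ̄*A_zv] is of full column rank if and only if the (n+v)×k matrix Ψ(λ) = [λ•N_cx − (A_xx*N_cx + A_xv*N_cv); N_cv − Φ̄*(A_zx*N_cx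 + A_zv*N_cv)] is of full column rank. -/
/-!
Up to sign and the order of rows, `M(λ)` stacks `[T; B]` (its first and last block rows) on
`[C_x C_v]`, and `Ψ(λ) = [T; B] * N` with `N = [N_cx; N_cv]`. Hence
`ker M(λ) = ker [T; B] ⊓ ker [C_x C_v] = ker [T; B] ⊓ range N`, and since `N` is injective this
intersection is trivial exactly when `[T; B] * N` is injective.
-/

open Function LinearMap

theorem LinearMap.injective_comp_iff_disjoint_range_ker {R M₁ M₂ M₃ : Type*} [Ring R]
    [AddCommGroup M₁] [AddCommGroup M₂] [AddCommGroup M₃]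
    [Module R M₁] [Module R M₂] [Module R M₃] {f : M₂ →ₗ[R] M₃} {g : M₁ →ₗ[R] M₂}
    (hg : Injective g) : Injective (f ∘ₗ g) ↔ Disjoint (range g) (ker f) := by
  rw [disjoint_ker_iff_injOn, coe_comp, coe_range]
  exact ⟨Injective.injOn_range, fun hf _ _ hxy ↦ hg (hf ⟨_, rfl⟩ ⟨_, rfl⟩ hxy)⟩

namespace Matrix

variable {R m₁ m₂ ι κ : Type*} [CommRing R] [Fintype ι]

theorem ker_mulVecLin_fromRows (A₁ : Matrix m₁ ι R) (A₂ : Matrix m₂ ι R) :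
    ker (fromRows A₁ A₂).mulVecLin = ker A₁.mulVecLin ⊓ ker A₂.mulVecLin := by
  ext x
  simp [fromRows_mulVec, funext_iff, Sum.forall]

theorem ker_mulVecLin_neg (A : Matrix m₁ ι R) : ker (-A).mulVecLin = ker A.mulVecLin := by
  ext x
  simp

theorem injective_mulVecLin_fromRows_iff_mul [Fintype κ] {A : Matrix m₁ ι R}
    {C : Matrix m₂ ι R} {N : Matrix ι κ R} (hN : Injective N.mulVecLin)
    (hrange : range N.mulVecLin = ker C.mulVecLin) :
    Injective (fromRows A C).mulVecLin ↔ Injective (A * N).mulVecLin := by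
  rw [← ker_eq_bot, ker_mulVecLin_fromRows, mulVecLin_mul,
    injective_comp_iff_disjoint_range_ker hN, hrange, disjoint_iff, inf_comm]

end Matrix

open Matrix

/-- With `[N_cx; N_cv]` of full column rank and of range equal to the
kernel of `[C_x  C_v]`, for every `λ` the matrix `M(λ)` is of full column rank iff
`Ψ(λ)` is. -/
theorem stmt8 {F : Type*} [Field F] {n v z p k : ℕ}
    (Axx : Matrix (Fin n) (Fin n) F) (Axv : Matrix (Fin n) (Fin v) F)
    (Azx : Matrix (Fin z) (Fin n) F) (Azv : Matrix (Fin z) (Fin v) F)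
    (Cx : Matrix (Fin p) (Fin n) F) (Cv : Matrix (Fin p) (Fin v) F)
    (Φ : Matrix (Fin v) (Fin z) F)
    (Ncx : Matrix (Fin n) (Fin k) F) (Ncv : Matrix (Fin v) (Fin k) F)
    (hN : Function.Injective (Matrix.fromRows Ncx Ncv).mulVecLin)
    (hrange : LinearMap.range (Matrix.fromRows Ncx Ncv).mulVecLin =
        LinearMap.ker (Matrix.fromCols Cx Cv).mulVecLin) :
    ∀ l : F,
      Function.Injective (Matrix.fromRows (Matrix.fromRows
          (Matrix.fromCols (l • 1 - Axx) (-Axv))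
          (Matrix.fromCols (-Cx) (-Cv)))
          (Matrix.fromCols (-(Φ * Azx)) (1 - Φ * Azv))).mulVecLin ↔
      Function.Injective (Matrix.fromRows
          (l • Ncx - (Axx * Ncx + Axv * Ncv))
          (Ncv - Φ * (Azx * Ncx + Azv * Ncv))).mulVecLin := by
  intro l
  set T := fromCols (l • 1 - Axx) (-Axv)
  set B := fromCols (-(Φ * Azx)) (1 - Φ * Azv)
  have hM : Injective (fromRows (fromRows T (fromCols (-Cx) (-Cv))) B).mulVecLin ↔
      Injective (fromRows (fromRows T B) (fromCols Cx Cv)).mulVecLin := by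
    simp only [← ker_eq_bot, ker_mulVecLin_fromRows, ← fromCols_neg, ker_mulVecLin_neg,
      inf_right_comm]
  have hΨ : fromRows (l • Ncx - (Axx * Ncx + Axv * Ncv)) (Ncv - Φ * (Azx * Ncx + Azv * Ncv)) =
      fromRows T B * fromRows Ncx Ncv := by
    simp only [T, B, fromRows_mul, fromCols_mul_fromRows]
    congr 1 <;>
      simp only [Matrix.sub_mul, Matrix.mul_add, Matrix.smul_mul, Matrix.one_mul,
        Matrix.neg_mul, Matrix.mul_assoc] <;>
      abel
  rw [hM, hΨ]
  exact injective_mulVecLin_fromRows_iff_mul hN hrange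
end

section
/- Let F be a field, and let A_xx be an n×n matrix, A an n×v matrix, and P an n×k matrix over F. Assume that the v×v matrix Aᵀ*A is invertible. Define, for λ ∈ F, the matrices Ω(λ) = [(λ•1 − A_xx)*P | A] (an n×(k+v) matrix formed by horizontal concatenation) and Θ(λ) = (1 − A*(Aᵀ*A)⁻¹*Aᵀ)*(λ•1 − A_xx)*P (an n×k matrix). Then for every λ ∈ F, Ω(λ) is of full column rank if and only if Θ(λ) is of full column rank. -/
/-!
Write `Ω(λ) = [B | A]` with `B = (λ•1 − A_xx) P` and let `Q = 1 − A (AᵀA)⁻¹ Aᵀ`, so that `Q A = 0`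
and `B = Q B + A C` with `C = (AᵀA)⁻¹ Aᵀ B`. Since `A` is injective, a kernel vector `(x, y)` of
`Ω(λ)` is determined by `x`, and `x` ranges exactly over the kernel of `Θ(λ) = Q B`: applying `Q`
to `B x + A y = 0` gives `Q B x = 0`, and conversely `Q B x = 0` gives the kernel vector
`(x, −C x)`.
-/

open Matrix

namespace Matrix

variable {R : Type*} [CommRing R] {m n p : Type*} [Fintype m] [Fintype n] [Fintype p]

theorem mulVec_injective_of_isUnit_transpose_mul [DecidableEq n]
    {A : Matrix m n R} (hA : IsUnit (Aᵀ * A)) : Function.Injective A.mulVec := by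
  have h : Function.Injective (Aᵀ.mulVec ∘ A.mulVec) := by
    simpa only [Function.comp_def, mulVec_mulVec] using mulVec_injective_of_isUnit hA
  exact h.of_comp

theorem one_sub_mul_inv_transpose_mul_mul_transpose_mul_eq_zero [DecidableEq m]
    [DecidableEq n] {A : Matrix m n R} (hA : IsUnit (Aᵀ * A)) :
    (1 - A * (Aᵀ * A)⁻¹ * Aᵀ) * A = 0 := by
  rw [Matrix.sub_mul, Matrix.one_mul, Matrix.mul_assoc, Matrix.mul_assoc,
    nonsing_inv_mul _ ((isUnit_iff_isUnit_det _).mp hA), Matrix.mul_one, sub_self]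

theorem injective_mulVecLin_fromCols_iff {A : Matrix m n R} {B : Matrix m p R}
    {Q : Matrix m m R} (C : Matrix n p R) (hA : Function.Injective A.mulVec) (hQA : Q * A = 0)
    (hB : B = Q * B + A * C) :
    Function.Injective (fromCols B A).mulVecLin ↔ Function.Injective (Q * B).mulVecLin := by
  simp only [injective_iff_map_eq_zero, mulVecLin_apply]
  constructor
  · intro hΩ x hx
    have hker : fromCols B A *ᵥ Sum.elim x (-(C *ᵥ x)) = 0 := by
      rw [fromCols_mulVec_sumElim, mulVec_neg, ← sub_eq_add_neg, sub_eq_zero]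
      conv_lhs => rw [hB]
      rw [add_mulVec, hx, zero_add, mulVec_mulVec]
    exact congrArg (· ∘ Sum.inl) (hΩ _ hker)
  · intro hΘ z hz
    rw [← Sum.elim_comp_inl_inr z, fromCols_mulVec_sumElim] at hz
    have hx : z ∘ Sum.inl = 0 := hΘ _ <| by
      simpa only [mulVec_add, mulVec_mulVec, hQA, zero_mulVec, add_zero, mulVec_zero]
        using congrArg (Q *ᵥ ·) hz
    have hy : z ∘ Sum.inr = 0 := hA <| by simpa [hx] using hz
    rw [← Sum.elim_comp_inl_inr z, hx, hy, Sum.elim_zero_zero]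

end Matrix

/-- If `Aᵀ * A` is invertible, then for every `λ` the matrix
`Ω(λ) = [(λ•1 − A_xx)*P | A]` is of full column rank iff
`Θ(λ) = (1 − A*(Aᵀ*A)⁻¹*Aᵀ)*(λ•1 − A_xx)*P` is. -/
theorem stmt10 {F : Type*} [Field F] {n v k : ℕ}
    (Axx : Matrix (Fin n) (Fin n) F) (A : Matrix (Fin n) (Fin v) F)
    (P : Matrix (Fin n) (Fin k) F)
    (hA : IsUnit (Aᵀ * A)) :
    ∀ l : F,
      Function.Injective (Matrix.fromCols ((l • 1 - Axx) * P) A).mulVecLin ↔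
      Function.Injective
        ((1 - A * (Aᵀ * A)⁻¹ * Aᵀ) * ((l • 1 - Axx) * P)).mulVecLin := by
  intro l
  refine injective_mulVecLin_fromCols_iff ((Aᵀ * A)⁻¹ * Aᵀ * ((l • 1 - Axx) * P))
    (mulVec_injective_of_isUnit_transpose_mul hA)
    (one_sub_mul_inv_transpose_mul_mul_transpose_mul_eq_zero hA) ?_
  simp only [Matrix.sub_mul, Matrix.one_mul, Matrix.mul_assoc, sub_add_cancel]
end

section
/- Let E and A_xx be n×n complex matrices, A_xv an n×v complex matrix, A_zx a z×n complex matrix, A_zv a z×v complex matrix, and Φ̄ a v×z complex matrix, and assume the v×v matrix W = 1 − Φ̄*A_zv is invertible. Define A = A_xx + A_xv*W⁻¹*Φ̄*A_zx, and for λ ∈ ℂ define the (n+v)×(n+v) block matrix Π(λ) = [λ•E − A_xx, −A_xv; −Φ̄*A_zx, W]. Let S be a finite set of complex numbers with exactly n+1 elements. Then there exists λ ∈ ℂ with det(λ•E − A) ≠ 0 if and only if there exists λ₀ ∈ S such that Π(λ₀) is invertible. -/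
open Polynomial Matrix

/-- With `W = 1 − Φ̄*A_zv` invertible and
`A = A_xx + A_xv*W⁻¹*Φ̄*A_zx`, for any set `S` of exactly `n+1` complex numbers, the
pencil `λ•E − A` is regular iff `Π(λ₀)` is invertible for some `λ₀ ∈ S`. -/
theorem stmt12 {n v z : ℕ}
    (E Axx : Matrix (Fin n) (Fin n) ℂ) (Axv : Matrix (Fin n) (Fin v) ℂ)
    (Azx : Matrix (Fin z) (Fin n) ℂ) (Azv : Matrix (Fin z) (Fin v) ℂ)
    (Φ : Matrix (Fin v) (Fin z) ℂ)
    (hW : IsUnit (1 - Φ * Azv))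
    (S : Finset ℂ) (hS : S.card = n + 1) :
    (∃ l : ℂ, (l • E - (Axx + Axv * (1 - Φ * Azv)⁻¹ * Φ * Azx)).det ≠ 0) ↔
    ∃ l₀ ∈ S, IsUnit (Matrix.fromBlocks
        (l₀ • E - Axx) (-Axv) (-(Φ * Azx)) (1 - Φ * Azv)) := by
  set W : Matrix (Fin v) (Fin v) ℂ := 1 - Φ * Azv with hWdef
  set A : Matrix (Fin n) (Fin n) ℂ := Axx + Axv * W⁻¹ * Φ * Azx with hAdef
  haveI : Invertible W := hW.invertible
  have hWdet : W.det ≠ 0 := by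
    simpa using (Matrix.isUnit_iff_isUnit_det W).1 hW
  -- key: invertibility of the block matrix at λ ↔ det (λ•E - A) ≠ 0
  have key : ∀ l : ℂ, IsUnit (Matrix.fromBlocks
      (l • E - Axx) (-Axv) (-(Φ * Azx)) W) ↔ (l • E - A).det ≠ 0 := by
    intro l
    rw [Matrix.isUnit_iff_isUnit_det, isUnit_iff_ne_zero,
      Matrix.det_fromBlocks₂₂, invOf_eq_nonsing_inv]
    have : (l • E - Axx) - (-Axv) * W⁻¹ * (-(Φ * Azx)) = l • E - A := by
      rw [hAdef]
      simp [Matrix.neg_mul, Matrix.mul_neg, sub_sub, Matrix.mul_assoc]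
    rw [this, mul_ne_zero_iff]
    simp [hWdet]
  constructor
  · rintro ⟨l, hl⟩
    -- polynomial argument
    set p : ℂ[X] := Matrix.det ((X : ℂ[X]) • E.map C + (-A).map C) with hp
    have hev : ∀ μ : ℂ, p.eval μ = (μ • E - A).det := by
      intro μ
      rw [hp, ← coe_evalRingHom, RingHom.map_det]
      congr 1
      ext i j
      simp [sub_eq_add_neg]; ring
    have hpne : p ≠ 0 := fun h => hl (by rw [← hev l, h, eval_zero])
    have hdeg : p.natDegree ≤ n := by
      simpa using Polynomial.natDegree_det_X_add_C_le E (-A)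
    -- roots of p among S can't cover all of S
    by_contra hcon
    push_neg at hcon
    have hroot : ∀ μ ∈ S, p.eval μ = 0 := by
      intro μ hμ
      have := hcon μ hμ
      rw [key μ] at this
      rw [hev μ]
      exact not_not.mp this
    have hsub : S ⊆ p.roots.toFinset := by
      intro μ hμ
      simp [Polynomial.mem_roots, hpne, hroot μ hμ, Polynomial.IsRoot]
    have := Finset.card_le_card hsub
    have h2 : p.roots.toFinset.card ≤ n := by
      calc p.roots.toFinset.card ≤ Multiset.card p.roots := Multiset.toFinset_card_le _
        _ ≤ p.natDegree := Polynomial.card_roots' p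
        _ ≤ n := hdeg
    omega
  · rintro ⟨l₀, _, hu⟩
    exact ⟨l₀, (key l₀).1 hu⟩
end

section
/- Let F be a field and let E and A_xx be n×n matrices, A_xv an n×v matrix, A_zx a z×n matrix, A_zv a z×v matrix, C_x a p×n matrix, C_v a p×v matrix, and Φ̄ a v×z matrix over F, and assume the v×v matrix W = 1 − Φ̄*A_zv is invertible. Then for every λ ∈ F, the (n+p+v)×(n+v) matrix [λ•E − A_xx, −A_xv; −C_x, −C_v; −Φ̄*A_zx, W] is of full column rank if and only if the (n+p)×n matrix [λ•E − (A_xx + A_xv*W⁻¹*Φ̄*A_zx); C_x + C_v*W⁻¹*Φ̄*A_zx] is of full column rank. -/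
/-!
Since `W` is invertible, the last block row `-Φ̄ A_zx x + W y = 0` forces `y = W⁻¹ Φ̄ A_zx x`.
Substituting this into the other block rows identifies the kernel of the large matrix with the
kernel of the Schur complement of `W`, which is the second matrix with its lower block row negated.
-/

open Matrix

theorem Sum.elim_eq_zero_iff {α β γ : Type*} [Zero γ] (u : α → γ) (v : β → γ) :
    Sum.elim u v = 0 ↔ u = 0 ∧ v = 0 := by
  rw [← Sum.elim_zero_zero, Sum.elim_eq_iff]

namespace Matrix

theorem fromRows_sub_fromRows {R m m' k : Type*} [Sub R] (A₁ B₁ : Matrix m k R)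
    (A₂ B₂ : Matrix m' k R) :
    fromRows A₁ A₂ - fromRows B₁ B₂ = fromRows (A₁ - B₁) (A₂ - B₂) := by
  ext (i | i) j <;> rfl

variable {R : Type*} [CommRing R] {k l m m' : Type*} [Fintype k] [Fintype l] [DecidableEq l]

theorem fromBlocks_mulVec_sumElim_neg_inv_mulVec (A : Matrix m k R) (B : Matrix m l R)
    (C : Matrix l k R) {D : Matrix l l R} (hD : IsUnit D) (x : k → R) :
    fromBlocks A B C D *ᵥ Sum.elim x (-(D⁻¹ *ᵥ C *ᵥ x)) =
      Sum.elim ((A - B * D⁻¹ * C) *ᵥ x) 0 := by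
  have hDdet : IsUnit D.det := (isUnit_iff_isUnit_det D).mp hD
  rw [fromBlocks_mulVec, Sum.elim_comp_inl, Sum.elim_comp_inr, mulVec_neg, mulVec_neg,
    mulVec_mulVec _ D, mul_nonsing_inv _ hDdet, one_mulVec, add_neg_cancel, sub_mulVec,
    ← mulVec_mulVec, ← mulVec_mulVec, sub_eq_add_neg]

theorem eq_neg_inv_mulVec_mulVec_of_mulVec_add_mulVec_eq_zero {C : Matrix l k R}
    {D : Matrix l l R} (hD : IsUnit D) {x : k → R} {y : l → R} (h : C *ᵥ x + D *ᵥ y = 0) :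
    y = -(D⁻¹ *ᵥ C *ᵥ x) := by
  have hDdet : IsUnit D.det := (isUnit_iff_isUnit_det D).mp hD
  rw [← mulVec_neg, neg_eq_of_add_eq_zero_right h, mulVec_mulVec, nonsing_inv_mul _ hDdet,
    one_mulVec]

theorem injective_mulVecLin_fromBlocks_iff (A : Matrix m k R) (B : Matrix m l R)
    (C : Matrix l k R) {D : Matrix l l R} (hD : IsUnit D) :
    Function.Injective (fromBlocks A B C D).mulVecLin ↔
      Function.Injective (A - B * D⁻¹ * C).mulVecLin := by
  simp only [injective_iff_map_eq_zero, mulVecLin_apply]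
  constructor
  · intro h x hx
    have hxy := h _ <| by
      rw [fromBlocks_mulVec_sumElim_neg_inv_mulVec A B C hD x, hx, Sum.elim_zero_zero]
    exact congrArg (· ∘ Sum.inl) hxy
  · intro h u hu
    obtain ⟨x, y, rfl⟩ : ∃ x y, u = Sum.elim x y := ⟨_, _, (Sum.elim_comp_inl_inr u).symm⟩
    have hy : y = -(D⁻¹ *ᵥ C *ᵥ x) := by
      rw [fromBlocks_mulVec, Sum.elim_comp_inl, Sum.elim_comp_inr, Sum.elim_eq_zero_iff] at hu
      exact eq_neg_inv_mulVec_mulVec_of_mulVec_add_mulVec_eq_zero hD hu.2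
    rw [hy, fromBlocks_mulVec_sumElim_neg_inv_mulVec A B C hD, Sum.elim_eq_zero_iff] at hu
    rw [hy, h x hu.1, mulVec_zero, mulVec_zero, neg_zero, Sum.elim_zero_zero]

theorem injective_mulVecLin_fromRows_neg_iff (X : Matrix m k R) (Y : Matrix m' k R) :
    Function.Injective (fromRows X (-Y)).mulVecLin ↔
      Function.Injective (fromRows X Y).mulVecLin := by
  simp only [injective_iff_map_eq_zero, mulVecLin_apply, fromRows_mulVec, Sum.elim_eq_zero_iff,
    neg_mulVec, neg_eq_zero]

end Matrix

/-- With `W = 1 − Φ̄*A_zv` invertible, for every `λ` the matrix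
`[λ•E − A_xx, −A_xv; −C_x, −C_v; −Φ̄*A_zx, W]` is of full column rank iff
`[λ•E − (A_xx + A_xv*W⁻¹*Φ̄*A_zx); C_x + C_v*W⁻¹*Φ̄*A_zx]` is. -/
theorem stmt13 {F : Type*} [Field F] {n v z p : ℕ}
    (E Axx : Matrix (Fin n) (Fin n) F) (Axv : Matrix (Fin n) (Fin v) F)
    (Azx : Matrix (Fin z) (Fin n) F) (Azv : Matrix (Fin z) (Fin v) F)
    (Cx : Matrix (Fin p) (Fin n) F) (Cv : Matrix (Fin p) (Fin v) F)
    (Φ : Matrix (Fin v) (Fin z) F)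
    (hW : IsUnit (1 - Φ * Azv)) :
    ∀ l : F,
      Function.Injective (Matrix.fromRows (Matrix.fromRows
          (Matrix.fromCols (l • E - Axx) (-Axv))
          (Matrix.fromCols (-Cx) (-Cv)))
          (Matrix.fromCols (-(Φ * Azx)) (1 - Φ * Azv))).mulVecLin ↔
      Function.Injective (Matrix.fromRows
          (l • E - (Axx + Axv * (1 - Φ * Azv)⁻¹ * Φ * Azx))
          (Cx + Cv * (1 - Φ * Azv)⁻¹ * Φ * Azx)).mulVecLin := by
  intro l
  set W := 1 - Φ * Azv
  have hschur : fromRows (l • E - Axx) (-Cx) - fromRows (-Axv) (-Cv) * W⁻¹ * -(Φ * Azx) =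
      fromRows (l • E - (Axx + Axv * W⁻¹ * Φ * Azx)) (-(Cx + Cv * W⁻¹ * Φ * Azx)) := by
    rw [fromRows_mul, fromRows_mul, fromRows_sub_fromRows]
    congr 1 <;> simp only [Matrix.neg_mul, Matrix.mul_neg, Matrix.mul_assoc] <;> abel
  -- regroup the three block rows into a 2 × 2 block matrix with `W` in the lower right corner
  rw [fromRows_fromCols_eq_fromBlocks, ← fromCols_fromRows_eq_fromBlocks,
    fromRows_fromCols_eq_fromBlocks, injective_mulVecLin_fromBlocks_iff _ _ _ hW, hschur,
    injective_mulVecLin_fromRows_neg_iff]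
end

section
/- Let F be a field and let A_xx be an n×n matrix, A_xv an n×v matrix, C_x a p×n matrix, and C_v a p×v matrix over F. Let λ ∈ F be such that λ•1 − A_xx is invertible. Then the (n+p)×(n+v) matrix [λ•1 − A_xx, −A_xv; −C_x, −C_v] is of full column rank if and only if the p×v matrix C_v + C_x*(λ•1 − A_xx)⁻¹*A_xv is of full column rank. -/
open Matrix


/-- If `λ•1 − A_xx` is invertible, then
`[λ•1 − A_xx, −A_xv; −C_x, −C_v]` is of full column rank iff
`C_v + C_x*(λ•1 − A_xx)⁻¹*A_xv` is. -/
theorem stmt16 {F : Type*} [Field F] {n v p : ℕ}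
    (Axx : Matrix (Fin n) (Fin n) F) (Axv : Matrix (Fin n) (Fin v) F)
    (Cx : Matrix (Fin p) (Fin n) F) (Cv : Matrix (Fin p) (Fin v) F)
    (l : F) (hl : IsUnit (l • (1 : Matrix (Fin n) (Fin n) F) - Axx)) :
    Function.Injective (Matrix.fromBlocks
        (l • 1 - Axx) (-Axv) (-Cx) (-Cv)).mulVecLin ↔
    Function.Injective (Cv + Cx * (l • 1 - Axx)⁻¹ * Axv).mulVecLin := by
  set B := l • (1 : Matrix (Fin n) (Fin n) F) - Axx with hB
  have hdet : IsUnit B.det := (Matrix.isUnit_iff_isUnit_det B).mp hl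
  have hBB : B⁻¹ * B = 1 := Matrix.nonsing_inv_mul B hdet
  have hBB' : B * B⁻¹ = 1 := Matrix.mul_nonsing_inv B hdet
  constructor
  · intro h
    rw [injective_iff_map_eq_zero] at h ⊢
    intro y hy
    simp only [Matrix.mulVecLin_apply] at hy
    have key0 : Cx *ᵥ (B⁻¹ *ᵥ (Axv *ᵥ y)) + Cv *ᵥ y = 0 := by
      rw [Matrix.mulVec_mulVec, Matrix.mulVec_mulVec, add_comm, ← Matrix.add_mulVec]
      exact hy
    have hinl : B *ᵥ (B⁻¹ *ᵥ (Axv *ᵥ y)) + (-Axv) *ᵥ y = 0 := by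
      rw [Matrix.mulVec_mulVec, hBB', Matrix.one_mulVec, Matrix.neg_mulVec, add_neg_cancel]
    have hinr : (-Cx) *ᵥ (B⁻¹ *ᵥ (Axv *ᵥ y)) + (-Cv) *ᵥ y = 0 := by
      rw [Matrix.neg_mulVec, Matrix.neg_mulVec, ← neg_add, neg_eq_zero]
      exact key0
    have key : (Matrix.fromBlocks B (-Axv) (-Cx) (-Cv)).mulVecLin
        (Sum.elim (B⁻¹ *ᵥ (Axv *ᵥ y)) y) = 0 := by
      rw [Matrix.mulVecLin_apply, Matrix.fromBlocks_mulVec,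
        Sum.elim_comp_inl, Sum.elim_comp_inr, hinl, hinr]
      funext i
      cases i <;> rfl
    have := h _ key
    funext j
    exact congrFun this (Sum.inr j)
  · intro h
    rw [injective_iff_map_eq_zero] at h ⊢
    intro z hz
    simp only [Matrix.mulVecLin_apply, Matrix.fromBlocks_mulVec] at hz
    set x := z ∘ Sum.inl with hx
    set y := z ∘ Sum.inr with hyy
    have e1 : B *ᵥ x = Axv *ᵥ y := by
      have e1' : B *ᵥ x + (-Axv) *ᵥ y = 0 := funext fun i => congrFun hz (Sum.inl i)
      rwa [Matrix.neg_mulVec, add_neg_eq_zero] at e1'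
    have e2 : Cx *ᵥ x + Cv *ᵥ y = 0 := by
      have e2' : (-Cx) *ᵥ x + (-Cv) *ᵥ y = 0 := funext fun i => congrFun hz (Sum.inr i)
      rwa [Matrix.neg_mulVec, Matrix.neg_mulVec, ← neg_add, neg_eq_zero] at e2'
    have ex : x = B⁻¹ *ᵥ (Axv *ᵥ y) := by
      rw [← e1, Matrix.mulVec_mulVec, hBB, Matrix.one_mulVec]
    have hy0 : y = 0 := by
      apply h
      simp only [Matrix.mulVecLin_apply, Matrix.add_mulVec]
      rw [ex, Matrix.mulVec_mulVec, Matrix.mulVec_mulVec] at e2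
      rw [add_comm] at e2
      exact e2
    have hx0 : x = 0 := by rw [ex, hy0, Matrix.mulVec_zero, Matrix.mulVec_zero]
    funext i
    cases i with
    | inl i => exact congrFun hx0 i
    | inr i => exact congrFun hy0 i
end
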